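/- If r is even, then for any two sequences s, t ∈ Σⁿ with edit(s,t) ≤ 2r, there exists a sequence v ∈ Σⁿ with edit(s,v) ≤ r and edit(t,v) ≤ r. -/

import Mathlib

/-- Cost structure for edit distance (formerly `Levenshtein.Cost` in Mathlib). -/
structure Levenshtein.Cost (α β δ : Type*) where
  delete : α → δ
  insert : β → δ
  substitute : α → β → δ

/-- Unit costs (formerly `Levenshtein.defaultCost` in Mathlib). -/
def Levenshtein.defaultCost {α : Type*} [DecidableEq α] : Levenshtein.Cost α α ℕ where
  delete _ := 1
  insert _ := 1
  substitute a b := if a = b then 0 else 1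

/-- Levenshtein distance (formerly `levenshtein` in Mathlib), by its defining recursion. -/
def levenshtein {α β δ : Type*} [AddZeroClass δ] [Min δ] (C : Levenshtein.Cost α β δ) :
    List α → List β → δ
  | [], [] => 0
  | [], y :: ys => C.insert y + levenshtein C [] ys
  | x :: xs, [] => C.delete x + levenshtein C xs []
  | x :: xs, y :: ys =>
    min (C.delete x + levenshtein C xs (y :: ys))
      (min (C.insert y + levenshtein C (x :: xs) ys) (C.substitute x y + levenshtein C xs ys))
termination_by xs ys => xs.length + ys.length

/-- Edit (Levenshtein) distance between two length-`n` sequences over `α`. -/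
def editDist {α : Type*} [DecidableEq α] {n : ℕ} (s t : Fin n → α) : ℕ :=
  levenshtein Levenshtein.defaultCost (List.ofFn s) (List.ofFn t)

/-- `f` is a `(d₁, d₂)`-sensitive bucketing function. -/
def IsSensitive {α B : Type*} [DecidableEq α] {n : ℕ} (d₁ d₂ : ℕ)
    (f : (Fin n → α) → Set B) : Prop :=
  (∀ s t : Fin n → α, editDist s t ≤ d₁ → (f s ∩ f t).Nonempty) ∧
  (∀ s t : Fin n → α, d₂ ≤ editDist s t → f s ∩ f t = ∅)

/-!
Take an optimal alignment of `s` and `t`: it has `S` substitutions, `D` deletions and, the lengths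
being equal, `D` insertions, with `S + 2 * D ≤ 2 * r`. Applying to `s` any chosen part of these edit
operations yields a word `u` within the number of chosen operations of `s` and within the number of
the remaining ones of `t`. Choosing `min D (r / 2)` deletion–insertion pairs keeps `u` of length `n`,
and filling the rest of the budget `r` with substitutions leaves at most `r` operations on the
other side; `r / 2` is exact because `r` is even.
-/

open Levenshtein

local notation "lev" => levenshtein defaultCost

section

variable {α : Type*} [DecidableEq α]

theorem levenshtein_cons_cons (a b : α) (s t : List α) :
    lev (a :: s) (b :: t) =
      min (1 + lev s (b :: t)) (min (1 + lev (a :: s) t) ((if a = b then 0 else 1) + lev s t)) := by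
  rw [levenshtein]
  rfl

theorem levenshtein_cons_left_le (a : α) (s t : List α) : lev (a :: s) t ≤ lev s t + 1 := by
  cases t with
  | nil => rw [levenshtein]; exact (add_comm _ _).le
  | cons b t => rw [levenshtein_cons_cons]; exact min_le_of_left_le (add_comm _ _).le

theorem levenshtein_cons_right_le (s : List α) (b : α) (t : List α) :
    lev s (b :: t) ≤ lev s t + 1 := by
  cases s with
  | nil => rw [levenshtein]; exact (add_comm _ _).le
  | cons a s =>
    rw [levenshtein_cons_cons]
    exact min_le_of_right_le (min_le_of_left_le (add_comm _ _).le)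

theorem levenshtein_cons_cons_le (a b : α) (s t : List α) :
    lev (a :: s) (b :: t) ≤ lev s t + 1 := by
  rw [levenshtein_cons_cons]
  exact min_le_of_right_le (min_le_of_right_le (by split <;> omega))

theorem levenshtein_cons_cons_self_le (a : α) (s t : List α) :
    lev (a :: s) (a :: t) ≤ lev s t := by
  rw [levenshtein_cons_cons]
  exact min_le_of_right_le (min_le_of_right_le (by simp))

end

inductive AlignCol (α : Type*)
  | keep (a : α)
  | subst (a b : α)
  | del (a : α)
  | ins (b : α)

namespace AlignCol

variable {α : Type*}

def upper : List (AlignCol α) → List α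
  | [] => []
  | keep a :: L | subst a _ :: L | del a :: L => a :: upper L
  | ins _ :: L => upper L

def lower : List (AlignCol α) → List α
  | [] => []
  | keep b :: L | subst _ b :: L | ins b :: L => b :: lower L
  | del _ :: L => lower L

def numSubst : List (AlignCol α) → ℕ
  | [] => 0
  | subst _ _ :: L => numSubst L + 1
  | _ :: L => numSubst L

def numDel : List (AlignCol α) → ℕ
  | [] => 0
  | del _ :: L => numDel L + 1
  | _ :: L => numDel L

def numIns : List (AlignCol α) → ℕ
  | [] => 0
  | ins _ :: L => numIns L + 1
  | _ :: L => numIns L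

theorem length_upper_add_numIns (L : List (AlignCol α)) :
    (upper L).length + numIns L = (lower L).length + numDel L := by
  induction L with
  | nil => rfl
  | cons c L ih => cases c <;> simp only [upper, lower, numIns, numDel, List.length_cons] <;> omega

variable [DecidableEq α]

theorem exists_alignment_le_levenshtein (s t : List α) :
    ∃ L : List (AlignCol α), upper L = s ∧ lower L = t ∧
      numSubst L + numDel L + numIns L ≤ lev s t := by
  induction s, t using levenshtein.induct with
  | case1 => exact ⟨[], rfl, rfl, Nat.zero_le _⟩
  | case2 b t ih =>
    obtain ⟨L, hs, ht, hL⟩ := ih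
    refine ⟨ins b :: L, hs, by rw [lower, ht], ?_⟩
    rw [levenshtein]
    change _ ≤ 1 + _
    simp only [numSubst, numDel, numIns]
    omega
  | case3 a s ih =>
    obtain ⟨L, hs, ht, hL⟩ := ih
    refine ⟨del a :: L, by rw [upper, hs], ht, ?_⟩
    rw [levenshtein]
    change _ ≤ 1 + _
    simp only [numSubst, numDel, numIns]
    omega
  | case4 a s b t ihDel ihIns ihSubst =>
    rw [levenshtein_cons_cons]
    rcases min_choice (1 + lev s (b :: t)) (min (1 + lev (a :: s) t)
      ((if a = b then 0 else 1) + lev s t)) with h | h <;> rw [h]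
    · obtain ⟨L, hs, ht, hL⟩ := ihDel
      refine ⟨del a :: L, by rw [upper, hs], ht, ?_⟩
      simp only [numSubst, numDel, numIns]
      omega
    rcases min_choice (1 + lev (a :: s) t) ((if a = b then 0 else 1) + lev s t) with h | h <;>
      rw [h]
    · obtain ⟨L, hs, ht, hL⟩ := ihIns
      refine ⟨ins b :: L, hs, by rw [lower, ht], ?_⟩
      simp only [numSubst, numDel, numIns]
      omega
    obtain ⟨L, hs, ht, hL⟩ := ihSubst
    split_ifs with hab
    · subst hab
      exact ⟨keep a :: L, by rw [upper, hs], by rw [lower, ht], by simpa [numSubst, numDel, numIns]⟩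
    · refine ⟨subst a b :: L, by rw [upper, hs], by rw [lower, ht], ?_⟩
      simp only [numSubst, numDel, numIns]
      omega

-- `u` is obtained from `upper L` by performing `q` of the substitutions, `k` of the deletions and
-- `j` of the insertions of `L`.
theorem exists_intermediate (L : List (AlignCol α)) {q k j : ℕ} (hq : q ≤ numSubst L)
    (hk : k ≤ numDel L) (hj : j ≤ numIns L) :
    ∃ u : List α, lev (upper L) u ≤ q + k + j ∧
      lev (lower L) u ≤ (numSubst L - q) + (numDel L - k) + (numIns L - j) ∧
      u.length + k = (upper L).length + j := by
  induction L generalizing q k j with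
  | nil => exact ⟨[], by simp_all [upper, lower, numSubst, numDel, numIns, levenshtein]⟩
  | cons c L ih =>
    cases c with
    | keep a =>
      obtain ⟨u, hs, ht, hu⟩ := ih hq hk hj
      refine ⟨a :: u, (levenshtein_cons_cons_self_le _ _ _).trans hs,
        (levenshtein_cons_cons_self_le _ _ _).trans ht, ?_⟩
      simp only [upper, List.length_cons]
      omega
    | subst a b =>
      simp only [upper, lower, numSubst, numDel, numIns] at hq hk hj ⊢
      rcases q with _ | q
      · obtain ⟨u, hs, ht, hu⟩ := ih (Nat.zero_le _) hk hj
        refine ⟨a :: u, (levenshtein_cons_cons_self_le _ _ _).trans hs,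
          (levenshtein_cons_cons_le _ _ _ _).trans (by omega), by simp only [List.length_cons]; omega⟩
      · obtain ⟨u, hs, ht, hu⟩ := ih (Nat.le_of_succ_le_succ hq) hk hj
        refine ⟨b :: u, (levenshtein_cons_cons_le _ _ _ _).trans (by omega),
          (levenshtein_cons_cons_self_le _ _ _).trans (by omega), by simp only [List.length_cons]; omega⟩
    | del a =>
      simp only [upper, lower, numSubst, numDel, numIns] at hq hk hj ⊢
      rcases k with _ | k
      · obtain ⟨u, hs, ht, hu⟩ := ih hq (Nat.zero_le _) hj
        refine ⟨a :: u, (levenshtein_cons_cons_self_le _ _ _).trans hs,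
          (levenshtein_cons_right_le _ _ _).trans (by omega), by simp only [List.length_cons]; omega⟩
      · obtain ⟨u, hs, ht, hu⟩ := ih hq (Nat.le_of_succ_le_succ hk) hj
        refine ⟨u, (levenshtein_cons_left_le _ _ _).trans (by omega), ht.trans (by omega),
          by simp only [List.length_cons]; omega⟩
    | ins b =>
      simp only [upper, lower, numSubst, numDel, numIns] at hq hk hj ⊢
      rcases j with _ | j
      · obtain ⟨u, hs, ht, hu⟩ := ih hq hk (Nat.zero_le _)
        exact ⟨u, hs, (levenshtein_cons_left_le _ _ _).trans (by omega), hu⟩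
      · obtain ⟨u, hs, ht, hu⟩ := ih hq hk (Nat.le_of_succ_le_succ hj)
        refine ⟨b :: u, (levenshtein_cons_right_le _ _ _).trans (by omega),
          (levenshtein_cons_cons_self_le _ _ _).trans (by omega), by simp only [List.length_cons]; omega⟩

end AlignCol

open AlignCol in
theorem exists_levenshtein_le_of_levenshtein_le_two_mul {α : Type*} [DecidableEq α] {r : ℕ}
    (hr : Even r) (s t : List α) (hst : s.length = t.length) (h : lev s t ≤ 2 * r) :
    ∃ u : List α, u.length = s.length ∧ lev s u ≤ r ∧ lev t u ≤ r := by
  obtain ⟨m, rfl⟩ := hr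
  obtain ⟨L, rfl, rfl, hL⟩ := exists_alignment_le_levenshtein s t
  have hDI : numDel L = numIns L := by have := length_upper_add_numIns L; omega
  obtain ⟨u, hs, ht, hu⟩ := exists_intermediate L (q := min (numSubst L) (m + m - 2 * min (numDel L) m))
    (k := min (numDel L) m) (j := min (numDel L) m) (min_le_left _ _) (min_le_left _ _)
    (hDI ▸ min_le_left _ _)
  exact ⟨u, by omega, by omega, by omega⟩

theorem stmt9_general {α : Type*} [DecidableEq α]
    {n : ℕ} (r : ℕ) (hr : Even r) (s t : Fin n → α) (h : editDist s t ≤ 2 * r) :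
    ∃ v : Fin n → α, editDist s v ≤ r ∧ editDist t v ≤ r := by
  obtain ⟨u, hu, hs, ht⟩ := exists_levenshtein_le_of_levenshtein_le_two_mul hr
    (List.ofFn s) (List.ofFn t) (by simp) h
  rw [List.length_ofFn] at hu
  subst hu
  exact ⟨u.get, by rwa [editDist, List.ofFn_get], by rwa [editDist, List.ofFn_get]⟩

theorem stmt9 {α : Type*} [Fintype α] [DecidableEq α] (hα : 1 < Fintype.card α)
    {n : ℕ} (r : ℕ) (hr : Even r) (s t : Fin n → α) (h : editDist s t ≤ 2 * r) :
    ∃ v : Fin n → α, editDist s v ≤ r ∧ editDist t v ≤ r :=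
  stmt9_general r hr s t h
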